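/- Fix a nonempty finite index set of cardinality n and let M be the algebra of n×n complex matrices with normalized trace τ(A) = Tr(A)/n. Then log n is the greatest element of the set of real numbers of the form ∑_{i=1}^m (η(τ(x_i)) − τ(η(x_i))), taken over all finite families x_1, …, x_m of positive semidefinite matrices in M with ∑_{i=1}^m x_i = 1 (the identity matrix). That is, every such sum is ≤ log n, and some such family attains the value log n. -/

import Mathlib

/-! For a positive semidefinite `x` with eigenvalues `λ_l`, `τ(x) = ∑ λ_l / n` while
`τ(η(x)) + τ(x) log n = ∑ η(λ_l / n)`, so subadditivity of `η` on `[0, ∞)` gives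
`η(τ(x)) - τ(η(x)) ≤ τ(x) log n`; summing over a partition of unity bounds the sum by
`τ(1) log n = log n`. The `n` diagonal matrix units are projections, so `τ(η(e_j)) = 0`, and they
attain `n · η(1/n) = log n`. -/

open scoped ComplexOrder

/-- The entropy function `η(t) = −t log t` (with `η(0) = 0`). -/
noncomputable def eta (t : ℝ) : ℝ := -(t * Real.log t)

/-- The normalized trace `τ(A) = Tr(A)/n`, as a real number. -/
noncomputable def tauR {n : Type*} [Fintype n] [DecidableEq n] (A : Matrix n n ℂ) : ℝ :=
  (A.trace).re / (Fintype.card n)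

/-- `τ(η(A))` for a Hermitian matrix `A`: `(1/n)·∑ η(λ_l)` over the eigenvalues of `A`
(junk value `0` for non-Hermitian matrices). -/
noncomputable def tauEta {n : Type*} [Fintype n] [DecidableEq n] (A : Matrix n n ℂ) : ℝ :=
  if hA : A.IsHermitian then (∑ i, eta (hA.eigenvalues i)) / (Fintype.card n) else 0

open Matrix Finset Real

lemma eta_eq_negMulLog : eta = negMulLog := by
  ext t
  simp [eta, negMulLog]

lemma Real.negMulLog_sum_le_sum {ι : Type*} (s : Finset ι) {f : ι → ℝ} (hf : ∀ i ∈ s, 0 ≤ f i) :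
    negMulLog (∑ i ∈ s, f i) ≤ ∑ i ∈ s, negMulLog (f i) := by
  calc negMulLog (∑ i ∈ s, f i) = ∑ i ∈ s, -(f i * log (∑ j ∈ s, f j)) := by
        simp [negMulLog, sum_mul]
    _ ≤ ∑ i ∈ s, negMulLog (f i) := sum_le_sum fun i hi ↦ ?_
  rcases (hf i hi).eq_or_lt with hfi | hfi
  · simp [negMulLog, ← hfi]
  · have hlog : log (f i) ≤ log (∑ j ∈ s, f j) := log_le_log hfi (single_le_sum hf hi)
    simp only [negMulLog, neg_mul, neg_le_neg_iff]
    exact mul_le_mul_of_nonneg_left hlog hfi.le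

lemma Real.negMulLog_div_natCast (t : ℝ) (N : ℕ) :
    negMulLog (t / N) = negMulLog t / N + t / N * log N := by
  rw [div_eq_mul_inv, negMulLog_mul]
  simp only [negMulLog, log_inv]
  ring

lemma Matrix.IsHermitian.eigenvalues_eq_zero_or_one_of_isIdempotentElem {n : Type*} [Fintype n]
    [DecidableEq n] {A : Matrix n n ℂ} (hA : A.IsHermitian) (hA₂ : IsIdempotentElem A) (i : n) :
    hA.eigenvalues i = 0 ∨ hA.eigenvalues i = 1 :=
  hA₂.spectrum_subset ℝ (hA.eigenvalues_mem_spectrum_real i)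

lemma Matrix.posSemidef_single_one {n : Type*} [DecidableEq n] (i : n) :
    (single i i (1 : ℂ)).PosSemidef := by
  rw [← diagonal_single, posSemidef_diagonal_iff]
  intro j
  rcases eq_or_ne j i with rfl | hj
  · simp
  · simp [hj]

lemma Matrix.isIdempotentElem_single_one {n : Type*} [Fintype n] [DecidableEq n] (i : n) :
    IsIdempotentElem (single i i (1 : ℂ)) := by
  simp [IsIdempotentElem, single_mul_single_same]

section NormalizedTrace

variable {n : Type*} [Fintype n] [DecidableEq n]

lemma tauR_sum {ι : Type*} (s : Finset ι) (x : ι → Matrix n n ℂ) :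
    tauR (∑ i ∈ s, x i) = ∑ i ∈ s, tauR (x i) := by
  simp only [tauR, trace_sum, Complex.re_sum, sum_div]

lemma tauR_one [Nonempty n] : tauR (1 : Matrix n n ℂ) = 1 := by
  simp [tauR, trace_one]

lemma tauR_single_one (i : n) : tauR (single i i (1 : ℂ)) = (Fintype.card n : ℝ)⁻¹ := by
  simp [tauR, trace_single_eq_same]

lemma tauR_eq_sum_eigenvalues_div {A : Matrix n n ℂ} (hA : A.IsHermitian) :
    tauR A = ∑ i, hA.eigenvalues i / Fintype.card n := by
  rw [tauR, hA.trace_eq_sum_eigenvalues, ← sum_div]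
  simp [Complex.re_sum]

lemma tauEta_eq_zero_of_isIdempotentElem {A : Matrix n n ℂ} (hA : A.IsHermitian)
    (hA₂ : IsIdempotentElem A) : tauEta A = 0 := by
  rw [tauEta, dif_pos hA]
  have h : ∀ i, eta (hA.eigenvalues i) = 0 := fun i ↦ by
    rcases hA.eigenvalues_eq_zero_or_one_of_isIdempotentElem hA₂ i with h | h <;> simp [h, eta]
  simp [h]

lemma eta_tauR_sub_tauEta_le {A : Matrix n n ℂ} (hA : A.PosSemidef) :
    eta (tauR A) - tauEta A ≤ tauR A * log (Fintype.card n) := by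
  have hτ := tauR_eq_sum_eigenvalues_div hA.isHermitian
  have hsub : eta (tauR A) ≤ ∑ i, eta (hA.isHermitian.eigenvalues i / Fintype.card n) := by
    rw [hτ, eta_eq_negMulLog]
    exact negMulLog_sum_le_sum _ fun i _ ↦ div_nonneg (hA.eigenvalues_nonneg i) (Nat.cast_nonneg _)
  have hscale : ∑ i, eta (hA.isHermitian.eigenvalues i / Fintype.card n) =
      tauEta A + tauR A * log (Fintype.card n) := by
    rw [tauEta, dif_pos hA.isHermitian, hτ, sum_div, sum_mul, ← sum_add_distrib, eta_eq_negMulLog]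
    exact sum_congr rfl fun i _ ↦ negMulLog_div_natCast _ _
  linarith

end NormalizedTrace

/-- Property (D) of Theorem 2.5 for the full matrix algebra: `log n` is the greatest value of
`∑_i (η(τ(x_i)) − τ(η(x_i)))` over all finite partitions of unity `(x_i)` by positive
semidefinite matrices. -/
theorem entropy_of_matrix_algebra {n : Type*} [Fintype n] [DecidableEq n] [Nonempty n] :
    IsGreatest
      {s : ℝ | ∃ (m : ℕ) (x : Fin m → Matrix n n ℂ),
        (∀ i, (x i).PosSemidef) ∧ (∑ i, x i) = 1 ∧
        s = ∑ i, (eta (tauR (x i)) - tauEta (x i))}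
      (Real.log (Fintype.card n)) := by
  constructor
  · let e := (Fintype.equivFin n).symm
    refine ⟨Fintype.card n, fun k ↦ single (e k) (e k) 1, fun k ↦ posSemidef_single_one _,
      by rw [e.sum_comp fun i ↦ single i i (1 : ℂ), sum_single_one], ?_⟩
    simp only [tauR_single_one, tauEta_eq_zero_of_isIdempotentElem
      (posSemidef_single_one _).isHermitian (isIdempotentElem_single_one _), sub_zero, sum_const, card_univ,
      Fintype.card_fin, nsmul_eq_mul, eta, log_inv]
    field_simp
  · rintro _ ⟨m, x, hx, hsum, rfl⟩
    calc ∑ i, (eta (tauR (x i)) - tauEta (x i))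
        ≤ ∑ i, tauR (x i) * log (Fintype.card n) :=
          sum_le_sum fun i _ ↦ eta_tauR_sub_tauEta_le (hx i)
      _ = log (Fintype.card n) := by rw [← sum_mul, ← tauR_sum, hsum, tauR_one, one_mul]
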